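/- arXiv:2304.04577 — 3 statements merged into one kernel-verified Lean document; each statement's English description precedes it below -/
import Mathlib

section
/- Four-tangent I-patch tangency: Let L₁, L₂, L₃, L₄, C₁, C₂ : ℝ² → ℝ be affine functions, w₀, w₁, w₂ ∈ ℝ, and define I(x,y) = w₁·L₁(x,y)·L₂(x,y)·C₂(x,y)² + w₂·L₃(x,y)·L₄(x,y)·C₁(x,y)² + w₀·C₁(x,y)²·C₂(x,y)². If p ∈ ℝ² satisfies L₁(p) = 0 and C₁(p) = 0, then I(p) = 0 and ∇I(p) = w₁·L₂(p)·C₂(p)²·∇L₁(p). In particular, if w₁ ≠ 0, L₂(p) ≠ 0, C₂(p) ≠ 0, and ∇L₁(p) ≠ 0, then the line L₁ = 0 is tangent to the curve I = 0 at p. -/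
/-!
At `p` both `L₁` and `C₁` vanish. The last two summands of `I` contain the factor `C₁²`,
which vanishes to second order at `p`, so their derivatives vanish there; in the first
summand the product rule kills every term that does not differentiate the factor `L₁`.
-/

section ProductRuleAtZero

variable {𝕜 E : Type*} [NontriviallyNormedField 𝕜] [NormedAddCommGroup E] [NormedSpace 𝕜 E]
  {f g : E → 𝕜} {f' : E →L[𝕜] 𝕜} {p : E}

theorem HasFDerivAt.mul_of_eq_zero_left (hf : HasFDerivAt f f' p) (hg : DifferentiableAt 𝕜 g p)
    (h₀ : f p = 0) : HasFDerivAt (fun q => f q * g q) (g p • f') p :=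
  (hf.mul hg.hasFDerivAt).congr_fderiv (by ext v; simp [h₀])

theorem hasFDerivAt_sq_mul_of_eq_zero (hf : DifferentiableAt 𝕜 f p)
    (hg : DifferentiableAt 𝕜 g p) (h₀ : f p = 0) :
    HasFDerivAt (fun q => f q ^ 2 * g q) (0 : E →L[𝕜] 𝕜) p := by
  have h := hf.hasFDerivAt.mul_of_eq_zero_left (hf.mul hg) h₀
  refine (h.congr_fderiv ?_).congr_of_eventuallyEq (.of_forall fun q => ?_)
  · ext v
    simp [h₀]
  · simp only [Pi.mul_apply]
    ring

end ProductRuleAtZero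

theorem hasFDerivAt_iPatch {E : Type*} [NormedAddCommGroup E] [NormedSpace ℝ E]
    {L₁ L₂ L₃ L₄ C₁ C₂ : E → ℝ} {p : E} (w₀ w₁ w₂ : ℝ)
    (hL₁ : DifferentiableAt ℝ L₁ p) (hL₂ : DifferentiableAt ℝ L₂ p)
    (hL₃ : DifferentiableAt ℝ L₃ p) (hL₄ : DifferentiableAt ℝ L₄ p)
    (hC₁ : DifferentiableAt ℝ C₁ p) (hC₂ : DifferentiableAt ℝ C₂ p)
    (hp₁ : L₁ p = 0) (hpC : C₁ p = 0) :
    HasFDerivAt (fun q => w₁ * (L₁ q * L₂ q * C₂ q ^ 2)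
        + w₂ * (L₃ q * L₄ q * C₁ q ^ 2) + w₀ * (C₁ q ^ 2 * C₂ q ^ 2))
      ((w₁ * L₂ p * C₂ p ^ 2) • fderiv ℝ L₁ p) p := by
  have tangent : HasFDerivAt (fun q => L₁ q * (L₂ q * C₂ q ^ 2))
      ((L₂ p * C₂ p ^ 2) • fderiv ℝ L₁ p) p :=
    hL₁.hasFDerivAt.mul_of_eq_zero_left (hL₂.mul (hC₂.pow 2)) hp₁
  have flat₂ : HasFDerivAt (fun q => C₁ q ^ 2 * (L₃ q * L₄ q)) 0 p :=
    hasFDerivAt_sq_mul_of_eq_zero hC₁ (hL₃.mul hL₄) hpC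
  have flat₀ : HasFDerivAt (fun q => C₁ q ^ 2 * C₂ q ^ 2) 0 p :=
    hasFDerivAt_sq_mul_of_eq_zero hC₁ (hC₂.pow 2) hpC
  refine ((((tangent.const_mul w₁).add (flat₂.const_mul w₂)).add
    (flat₀.const_mul w₀)).congr_fderiv ?_).congr_of_eventuallyEq (.of_forall fun q => ?_)
  · ext v
    simp only [smul_zero, add_zero, smul_apply, smul_eq_mul]
    ring
  · simp only [Pi.add_apply]
    ring

/-- Four-tangent I-patch tangency: with affine `L₁,…,L₄, C₁, C₂` and
`I = w₁·L₁·L₂·C₂² + w₂·L₃·L₄·C₁² + w₀·C₁²·C₂²`, if `L₁(p) = 0` and `C₁(p) = 0`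
then `I(p) = 0` and `∇I(p) = w₁·L₂(p)·C₂(p)²·∇L₁(p)`; hence if `w₁ ≠ 0`,
`L₂(p) ≠ 0`, `C₂(p) ≠ 0` and `∇L₁(p) ≠ 0`, the line `L₁ = 0` is tangent to
the curve `I = 0` at `p`. -/
theorem stmt_5
    (a₁ b₁ c₁ a₂ b₂ c₂ a₃ b₃ c₃ a₄ b₄ c₄ aC₁ bC₁ cC₁ aC₂ bC₂ cC₂ : ℝ)
    (L₁ L₂ L₃ L₄ C₁ C₂ : ℝ × ℝ → ℝ)
    (hL₁ : ∀ q, L₁ q = a₁ * q.1 + b₁ * q.2 + c₁)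
    (hL₂ : ∀ q, L₂ q = a₂ * q.1 + b₂ * q.2 + c₂)
    (hL₃ : ∀ q, L₃ q = a₃ * q.1 + b₃ * q.2 + c₃)
    (hL₄ : ∀ q, L₄ q = a₄ * q.1 + b₄ * q.2 + c₄)
    (hC₁ : ∀ q, C₁ q = aC₁ * q.1 + bC₁ * q.2 + cC₁)
    (hC₂ : ∀ q, C₂ q = aC₂ * q.1 + bC₂ * q.2 + cC₂)
    (w₀ w₁ w₂ : ℝ)
    (I : ℝ × ℝ → ℝ)
    (hI : ∀ q, I q = w₁ * (L₁ q * L₂ q * (C₂ q) ^ 2)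
      + w₂ * (L₃ q * L₄ q * (C₁ q) ^ 2) + w₀ * ((C₁ q) ^ 2 * (C₂ q) ^ 2))
    (p : ℝ × ℝ) (hp₁ : L₁ p = 0) (hpC : C₁ p = 0) :
    I p = 0 ∧
    fderiv ℝ I p = (w₁ * L₂ p * (C₂ p) ^ 2) • fderiv ℝ L₁ p ∧
    (w₁ ≠ 0 → L₂ p ≠ 0 → C₂ p ≠ 0 → fderiv ℝ L₁ p ≠ 0 →
      ∃ c : ℝ, c ≠ 0 ∧ fderiv ℝ I p = c • fderiv ℝ L₁ p) := by
  have affine : ∀ (L : ℝ × ℝ → ℝ) (a b c : ℝ), (∀ q, L q = a * q.1 + b * q.2 + c) →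
      DifferentiableAt ℝ L p := by
    intro L a b c hL
    rw [funext hL]
    fun_prop
  have gradient : fderiv ℝ I p = (w₁ * L₂ p * C₂ p ^ 2) • fderiv ℝ L₁ p := by
    rw [funext hI]
    exact (hasFDerivAt_iPatch w₀ w₁ w₂ (affine _ _ _ _ hL₁) (affine _ _ _ _ hL₂)
      (affine _ _ _ _ hL₃) (affine _ _ _ _ hL₄) (affine _ _ _ _ hC₁) (affine _ _ _ _ hC₂)
      hp₁ hpC).fderiv
  refine ⟨by simp [hI, hp₁, hpC], gradient, fun hw₁ hL₂p hC₂p _ => ?_⟩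
  exact ⟨_, mul_ne_zero (mul_ne_zero hw₁ hL₂p) (pow_ne_zero 2 hC₂p), gradient⟩
end

section
/- In the four-tangent I-patch I = w₁·L₁·L₂·C₂² + w₂·L₃·L₄·C₁² + w₀·C₁²·C₂², if p ∈ ℝ² satisfies L₃(p) = 0 and C₂(p) = 0, then I(p) = 0 and ∇I(p) = w₂·L₄(p)·C₁(p)²·∇L₃(p); hence if w₂ ≠ 0, L₄(p) ≠ 0, C₁(p) ≠ 0 and ∇L₃(p) ≠ 0, the line L₃ = 0 is tangent to I = 0 at p. -/
/-! At a point where `L₃` and `C₂` vanish, the first and third terms of `I` carry the factor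
`C₂²`, which vanishes to second order, and the middle term is `L₃` times a differentiable
function, so only `w₂ · L₄(p) · C₁(p)² · ∇L₃(p)` survives in `∇I(p)`. -/

section VanishingFactors

variable {𝕜 E 𝔸 : Type*} [NontriviallyNormedField 𝕜] [NormedAddCommGroup E] [NormedSpace 𝕜 E]
  [NormedCommRing 𝔸] [NormedAlgebra 𝕜 𝔸] {f g : E → 𝔸} {f' g' : E →L[𝕜] 𝔸} {x : E}

theorem HasFDerivAt.mul_sq_of_eq_zero (hf : HasFDerivAt f f' x) (hg : HasFDerivAt g g' x)
    (hgx : g x = 0) : HasFDerivAt (fun y => f y * g y ^ 2) (0 : E →L[𝕜] 𝔸) x := by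
  refine (hf.mul (hg.pow 2)).congr_fderiv ?_
  ext v
  simp [hgx]

theorem HasFDerivAt.mul_of_left_eq_zero (hf : HasFDerivAt f f' x) (hg : HasFDerivAt g g' x)
    (hfx : f x = 0) : HasFDerivAt (fun y => f y * g y) (g x • f') x := by
  refine (hf.mul hg).congr_fderiv ?_
  ext v
  simp [hfx]

end VanishingFactors

theorem differentiableAt_of_eq_affine {L : ℝ × ℝ → ℝ} {a b c : ℝ}
    (hL : ∀ q, L q = a * q.1 + b * q.2 + c) (p : ℝ × ℝ) : DifferentiableAt ℝ L p := by
  rw [funext hL]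
  fun_prop

/-- Four-tangent I-patch tangency at the other side: with affine `L₁,…,L₄, C₁, C₂` and
`I = w₁·L₁·L₂·C₂² + w₂·L₃·L₄·C₁² + w₀·C₁²·C₂²`, if `L₃(p) = 0` and `C₂(p) = 0` then
`I(p) = 0` and `∇I(p) = w₂·L₄(p)·C₁(p)²·∇L₃(p)`; hence if `w₂ ≠ 0`, `L₄(p) ≠ 0`,
`C₁(p) ≠ 0` and `∇L₃(p) ≠ 0`, the line `L₃ = 0` is tangent to `I = 0` at `p`. -/
theorem stmt_6
    (a₁ b₁ c₁ a₂ b₂ c₂ a₃ b₃ c₃ a₄ b₄ c₄ aC₁ bC₁ cC₁ aC₂ bC₂ cC₂ : ℝ)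
    (L₁ L₂ L₃ L₄ C₁ C₂ : ℝ × ℝ → ℝ)
    (hL₁ : ∀ q, L₁ q = a₁ * q.1 + b₁ * q.2 + c₁)
    (hL₂ : ∀ q, L₂ q = a₂ * q.1 + b₂ * q.2 + c₂)
    (hL₃ : ∀ q, L₃ q = a₃ * q.1 + b₃ * q.2 + c₃)
    (hL₄ : ∀ q, L₄ q = a₄ * q.1 + b₄ * q.2 + c₄)
    (hC₁ : ∀ q, C₁ q = aC₁ * q.1 + bC₁ * q.2 + cC₁)
    (hC₂ : ∀ q, C₂ q = aC₂ * q.1 + bC₂ * q.2 + cC₂)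
    (w₀ w₁ w₂ : ℝ)
    (I : ℝ × ℝ → ℝ)
    (hI : ∀ q, I q = w₁ * (L₁ q * L₂ q * (C₂ q) ^ 2)
      + w₂ * (L₃ q * L₄ q * (C₁ q) ^ 2) + w₀ * ((C₁ q) ^ 2 * (C₂ q) ^ 2))
    (p : ℝ × ℝ) (hp₃ : L₃ p = 0) (hpC : C₂ p = 0) :
    I p = 0 ∧
    fderiv ℝ I p = (w₂ * L₄ p * (C₁ p) ^ 2) • fderiv ℝ L₃ p ∧
    (w₂ ≠ 0 → L₄ p ≠ 0 → C₁ p ≠ 0 → fderiv ℝ L₃ p ≠ 0 →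
      ∃ c : ℝ, c ≠ 0 ∧ fderiv ℝ I p = c • fderiv ℝ L₃ p) := by
  have hd₁ := (differentiableAt_of_eq_affine hL₁ p).hasFDerivAt
  have hd₂ := (differentiableAt_of_eq_affine hL₂ p).hasFDerivAt
  have hd₃ := (differentiableAt_of_eq_affine hL₃ p).hasFDerivAt
  have hd₄ := (differentiableAt_of_eq_affine hL₄ p).hasFDerivAt
  have hdC₁ := (differentiableAt_of_eq_affine hC₁ p).hasFDerivAt
  have hdC₂ := (differentiableAt_of_eq_affine hC₂ p).hasFDerivAt
  have hI' : I = fun q => w₁ * (L₁ q * L₂ q * C₂ q ^ 2) + w₂ * (L₃ q * (L₄ q * C₁ q ^ 2))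
      + w₀ * (C₁ q ^ 2 * C₂ q ^ 2) := funext fun q => by rw [hI]; ring
  have hderiv : HasFDerivAt I ((w₂ * L₄ p * C₁ p ^ 2) • fderiv ℝ L₃ p) p := by
    have h₁ := (HasFDerivAt.mul_sq_of_eq_zero (hd₁.mul hd₂) hdC₂ hpC).const_mul w₁
    have h₂ := (HasFDerivAt.mul_of_left_eq_zero hd₃ (hd₄.mul (hdC₁.pow 2)) hp₃).const_mul w₂
    have h₀ := (HasFDerivAt.mul_sq_of_eq_zero (hdC₁.pow 2) hdC₂ hpC).const_mul w₀
    rw [hI']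
    refine ((h₁.add h₂).add h₀).congr_fderiv ?_
    simp [smul_smul, mul_assoc]
  refine ⟨by rw [hI, hp₃, hpC]; ring, hderiv.fderiv, fun hw₂ hL₄p hC₁p _ => ?_⟩
  exact ⟨_, mul_ne_zero (mul_ne_zero hw₂ hL₄p) (pow_ne_zero 2 hC₁p), hderiv.fderiv⟩
end

section
/- Normalized I-patch reproduction: Under the hypotheses of the algebraic reproduction identity (ω₁((1−λ₁)R₁ + λ₁C₁²) = Q and ω₂((1−λ₂)R₂ + λ₂C₂²) = Q), at every point p ∈ ℝ² with C₁(p)² + C₂(p)² ≠ 0, the normalized I-patch I*(p) := (w₁·R₁(p)·C₂(p)² + w₂·R₂(p)·C₁(p)² + w₀·C₁(p)²·C₂(p)²) / (C₁(p)² + C₂(p)²) equals Q(p), where w₁ = ω₁(1−λ₁), w₂ = ω₂(1−λ₂), w₀ = ω₁λ₁ + ω₂λ₂. -/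
/-- Normalized I-patch reproduction: if `ω₁((1−lam₁)R₁ + lam₁C₁²) = Q` and
`ω₂((1−lam₂)R₂ + lam₂C₂²) = Q` pointwise, then at every `p` with
`C₁(p)² + C₂(p)² ≠ 0` the normalized I-patch equals `Q(p)`, where
`w₁ = ω₁(1−lam₁)`, `w₂ = ω₂(1−lam₂)`, `w₀ = ω₁lam₁ + ω₂lam₂`. -/
theorem stmt_8
    (Q R₁ R₂ C₁ C₂ : ℝ × ℝ → ℝ)
    (ω₁ lam₁ ω₂ lam₂ : ℝ)
    (h₁ : ∀ x, ω₁ * ((1 - lam₁) * R₁ x + lam₁ * (C₁ x) ^ 2) = Q x)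
    (h₂ : ∀ x, ω₂ * ((1 - lam₂) * R₂ x + lam₂ * (C₂ x) ^ 2) = Q x)
    (p : ℝ × ℝ) (hp : (C₁ p) ^ 2 + (C₂ p) ^ 2 ≠ 0) :
    (ω₁ * (1 - lam₁) * (R₁ p * (C₂ p) ^ 2)
      + ω₂ * (1 - lam₂) * (R₂ p * (C₁ p) ^ 2)
      + (ω₁ * lam₁ + ω₂ * lam₂) * ((C₁ p) ^ 2 * (C₂ p) ^ 2))
    / ((C₁ p) ^ 2 + (C₂ p) ^ 2) = Q p := by
  field_simp
  linear_combination (C₂ p) ^ 2 * h₁ p + (C₁ p) ^ 2 * h₂ p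
end
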